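/- Let v = v_ℓ with ℓ < n be the first vertex of the path P satisfying the cover condition, and set C* := Partition(v) ∩ P_{⪯v}. Then the minimum weight of a vertex cover of P equals ω(C*) plus the minimum weight of a vertex cover of the suffix subpath P_{v≺}; moreover, for every minimum weight vertex cover C' of P_{v≺}, the set C* ∪ C' is a minimum weight vertex cover of P. (Thus the instance can be split at v and the two subpaths solved independently.) -/

import Mathlib

open Finset

/-- `C` is a vertex cover of the subpath of the path `P = (v_0, …, v_{n-1})`
induced by the vertices `v_lo, v_{lo+1}, …, v_{hi-1}` (half-open interval `[lo, hi)`);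
the edges of this subpath are `{v_i, v_{i+1}}` for `lo ≤ i` and `i + 1 < hi`. -/
def IsCoverOn (lo hi : ℕ) (C : Finset ℕ) : Prop :=
  (∀ j ∈ C, lo ≤ j ∧ j < hi) ∧ ∀ i : ℕ, lo ≤ i → i + 1 < hi → (i ∈ C ∨ i + 1 ∈ C)

/-- The total weight `ω(C) = ∑_{v ∈ C} ω(v)` of a set of vertices. -/
def wsum (ω : ℕ → ℝ) (C : Finset ℕ) : ℝ := ∑ j ∈ C, ω j

/-- `C` is a minimum weight vertex cover (MWVC) of the subpath on the vertices `[lo, hi)`. -/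
def IsMWVCOn (ω : ℕ → ℝ) (lo hi : ℕ) (C : Finset ℕ) : Prop :=
  IsCoverOn lo hi C ∧ ∀ D : Finset ℕ, IsCoverOn lo hi D → wsum ω C ≤ wsum ω D

/-- `Partition(v_l) ∩ P_{⪯ v_l}`: the vertices up to (and including) `v_l` lying on the
same side of the path's bipartition as `v_l`. -/
def sameSide (l : ℕ) : Finset ℕ := (range (l + 1)).filter fun j => j % 2 = l % 2

/-- `P_{⪯ v_l} ∖ Partition(v_l)`: the vertices up to `v_l` on the opposite side. -/
def otherSide (l : ℕ) : Finset ℕ := (range (l + 1)).filter fun j => j % 2 ≠ l % 2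

/-- `v_l` satisfies the (weak) cover condition. -/
def CoverCond (ω : ℕ → ℝ) (l : ℕ) : Prop := wsum ω (sameSide l) ≤ wsum ω (otherSide l)

/-- `v_l` satisfies the strict cover condition. -/
def StrictCoverCond (ω : ℕ → ℝ) (l : ℕ) : Prop := wsum ω (sameSide l) < wsum ω (otherSide l)

/-!
While the cover condition fails at every `j < l`, the opposite side `otherSide j` is strictly
lighter than `sameSide j`, and induction on `l` shows that a cover of the prefix `[0, l]` weighs
at least `ω(sameSide l)` if it contains `v_l` and at least `ω(otherSide l)` otherwise. The cover
condition at `l` makes `sameSide l` the lighter of the two, so it is a minimum cover of the prefix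
that also covers the edge `{v_l, v_{l+1}}`. Any cover of the whole path splits into a cover of the
prefix and one of the suffix, hence weighs at least `ω(sameSide l)` plus the suffix optimum, and
`sameSide l ∪ C'` attains this bound.
-/

@[simp]
lemma mem_sameSide {j l : ℕ} : j ∈ sameSide l ↔ j < l + 1 ∧ j % 2 = l % 2 := by
  simp [sameSide]

@[simp]
lemma mem_otherSide {j l : ℕ} : j ∈ otherSide l ↔ j < l + 1 ∧ j % 2 ≠ l % 2 := by
  simp [otherSide]

lemma sameSide_zero : sameSide 0 = {0} := by decide

lemma otherSide_zero : otherSide 0 = ∅ := by decide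

lemma sameSide_succ (l : ℕ) : sameSide (l + 1) = insert (l + 1) (otherSide l) := by
  ext j
  simp only [mem_sameSide, mem_otherSide, mem_insert]
  omega

lemma otherSide_succ (l : ℕ) : otherSide (l + 1) = sameSide l := by
  ext j
  simp only [mem_sameSide, mem_otherSide]
  omega

lemma isCoverOn_sameSide (l : ℕ) : IsCoverOn 0 (l + 1) (sameSide l) := by
  refine ⟨fun j hj => ⟨j.zero_le, (mem_sameSide.mp hj).1⟩, fun i _ hi => ?_⟩
  simp only [mem_sameSide]
  omega

lemma wsum_filter_add_wsum_filter (ω : ℕ → ℝ) (D : Finset ℕ) (m : ℕ) :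
    wsum ω (D.filter (· < m)) + wsum ω (D.filter (m ≤ ·)) = wsum ω D := by
  simpa only [wsum, not_lt] using sum_filter_add_sum_filter_not D (· < m) ω

namespace IsCoverOn

variable {lo m hi : ℕ} {A B D : Finset ℕ}

lemma erase_top (hD : IsCoverOn lo (m + 1) D) : IsCoverOn lo m (D.erase m) := by
  refine ⟨fun j hj => ?_, fun i hlo hedge => ?_⟩
  · have := hD.1 j (mem_of_mem_erase hj)
    have := ne_of_mem_erase hj
    omega
  · simp only [mem_erase]
    rcases hD.2 i hlo (by omega) with h | h
    exacts [Or.inl ⟨by omega, h⟩, Or.inr ⟨by omega, h⟩]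

lemma filter_lt (hD : IsCoverOn lo hi D) (hm : m ≤ hi) :
    IsCoverOn lo m (D.filter (· < m)) := by
  refine ⟨fun j hj => ?_, fun i hlo hedge => ?_⟩
  · rw [mem_filter] at hj
    exact ⟨(hD.1 j hj.1).1, hj.2⟩
  · simp only [mem_filter]
    rcases hD.2 i hlo (by omega) with h | h
    exacts [Or.inl ⟨h, by omega⟩, Or.inr ⟨h, by omega⟩]

lemma filter_ge (hD : IsCoverOn lo hi D) (hm : lo ≤ m) :
    IsCoverOn m hi (D.filter (m ≤ ·)) := by
  refine ⟨fun j hj => ?_, fun i hlo hedge => ?_⟩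
  · rw [mem_filter] at hj
    exact ⟨hj.2, (hD.1 j hj.1).2⟩
  · simp only [mem_filter]
    rcases hD.2 i (by omega) hedge with h | h
    exacts [Or.inl ⟨h, by omega⟩, Or.inr ⟨h, by omega⟩]

lemma disjoint (hA : IsCoverOn lo m A) (hB : IsCoverOn m hi B) : Disjoint A B :=
  disjoint_left.mpr fun j hjA hjB => by
    have := (hA.1 j hjA).2
    have := (hB.1 j hjB).1
    omega

lemma union (hA : IsCoverOn lo (m + 1) A) (hB : IsCoverOn (m + 1) hi B) (hmA : m ∈ A)
    (hm : m < hi) : IsCoverOn lo hi (A ∪ B) := by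
  refine ⟨fun j hj => ?_, fun i hlo hedge => ?_⟩
  · rcases mem_union.mp hj with hj | hj
    · have := hA.1 j hj
      omega
    · have := hB.1 j hj
      have := (hA.1 m hmA).1
      omega
  · simp only [mem_union]
    rcases lt_trichotomy i m with h | rfl | h
    · have := hA.2 i hlo (by omega)
      tauto
    · exact Or.inl (Or.inl hmA)
    · have := hB.2 i h hedge
      tauto

end IsCoverOn

lemma add_le_wsum_of_isCoverOn {ω : ℕ → ℝ} {lo m hi : ℕ} {a b : ℝ} {D : Finset ℕ}
    (hpre : ∀ A, IsCoverOn lo m A → a ≤ wsum ω A) (hsuf : ∀ B, IsCoverOn m hi B → b ≤ wsum ω B)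
    (hD : IsCoverOn lo hi D) (hlo : lo ≤ m) (hhi : m ≤ hi) : a + b ≤ wsum ω D := by
  rw [← wsum_filter_add_wsum_filter ω D m]
  exact add_le_add (hpre _ (hD.filter_lt hhi)) (hsuf _ (hD.filter_ge hlo))

lemma wsum_ite_side_le_of_isCoverOn {ω : ℕ → ℝ} {l : ℕ} {D : Finset ℕ}
    (hfirst : ∀ j, j < l → ¬ CoverCond ω j) (hD : IsCoverOn 0 (l + 1) D) :
    wsum ω (if l ∈ D then sameSide l else otherSide l) ≤ wsum ω D := by
  induction l generalizing D with
  | zero =>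
    have hsub : D ⊆ {0} := fun j hj => by
      have := hD.1 j hj
      simp only [mem_singleton]
      omega
    rcases subset_singleton_iff.mp hsub with rfl | rfl <;>
      simp [sameSide_zero, otherSide_zero]
  | succ l ih =>
    have hlighter : wsum ω (otherSide l) < wsum ω (sameSide l) :=
      not_le.mp (hfirst l l.lt_succ_self)
    have hD' : IsCoverOn 0 (l + 1) (D.erase (l + 1)) := hD.erase_top
    have ih' := ih (fun j hj => hfirst j (by omega)) hD'
    split_ifs with hmem
    · have hbound : wsum ω (otherSide l) ≤ wsum ω (D.erase (l + 1)) := by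
        split_ifs at ih' <;> linarith
      have hnotin : l + 1 ∉ otherSide l := by simp
      rw [sameSide_succ, wsum, sum_insert hnotin, wsum, ← add_sum_erase D ω hmem]
      exact add_le_add le_rfl hbound
    · have hl : l ∈ D := (hD.2 l l.zero_le (by omega)).resolve_right hmem
      rw [erase_eq_of_notMem hmem, if_pos hl] at ih'
      rwa [otherSide_succ]

lemma wsum_sameSide_le_of_isCoverOn {ω : ℕ → ℝ} {l : ℕ} {D : Finset ℕ} (hcc : CoverCond ω l)
    (hfirst : ∀ j, j < l → ¬ CoverCond ω j) (hD : IsCoverOn 0 (l + 1) D) :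
    wsum ω (sameSide l) ≤ wsum ω D := by
  have := wsum_ite_side_le_of_isCoverOn hfirst hD
  split_ifs at this
  · exact this
  · exact hcc.trans this

/-- Let `v_l` (not the last vertex) be the first vertex of the path
satisfying the cover condition and `C* = Partition(v_l) ∩ P_{⪯ v_l}`. Then the minimum
cover weight of the path equals `ω(C*)` plus the minimum cover weight of the suffix
`P_{v_l ≺}`, and `C* ∪ C'` is a MWVC of the path for every MWVC `C'` of the suffix. -/
theorem stmt_6 (n l : ℕ) (ω : ℕ → ℝ) (hl : l + 1 < n)
    (hcc : CoverCond ω l) (hfirst : ∀ j, j < l → ¬ CoverCond ω j) :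
    (∀ C C' : Finset ℕ, IsMWVCOn ω 0 n C → IsMWVCOn ω (l + 1) n C' →
        wsum ω C = wsum ω (sameSide l) + wsum ω C') ∧
      (∀ C' : Finset ℕ, IsMWVCOn ω (l + 1) n C' → IsMWVCOn ω 0 n (sameSide l ∪ C')) := by
  have hunion : ∀ C', IsMWVCOn ω (l + 1) n C' → IsCoverOn 0 n (sameSide l ∪ C') :=
    fun C' hC' => (isCoverOn_sameSide l).union hC'.1 (by simp) (by omega)
  have hwsum : ∀ C', IsMWVCOn ω (l + 1) n C' →
      wsum ω (sameSide l ∪ C') = wsum ω (sameSide l) + wsum ω C' :=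
    fun C' hC' => sum_union ((isCoverOn_sameSide l).disjoint hC'.1)
  have hlower : ∀ C', IsMWVCOn ω (l + 1) n C' → ∀ D, IsCoverOn 0 n D →
      wsum ω (sameSide l) + wsum ω C' ≤ wsum ω D :=
    fun C' hC' D hD => add_le_wsum_of_isCoverOn
      (fun _ hA => wsum_sameSide_le_of_isCoverOn hcc hfirst hA) hC'.2 hD (Nat.zero_le _) hl.le
  refine ⟨fun C C' hC hC' => le_antisymm ?_ (hlower C' hC' C hC.1), fun C' hC' => ?_⟩
  · rw [← hwsum C' hC']
    exact hC.2 _ (hunion C' hC')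
  · refine ⟨hunion C' hC', fun D hD => ?_⟩
    rw [hwsum C' hC']
    exact hlower C' hC' D hD
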